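/- For any stateless deterministic pushdown automaton M with n pushdown symbols accepting a language L ≠ {ε}, there exists an equivalent stateless realtime pushdown automaton with at most n pushdown symbols. -/

import Mathlib

/-- A stateless deterministic pushdown automaton over input alphabet `A`:
one (implicit) state, pushdown alphabet `Γ`, transition function `δ`
(where `δ X none` is an ε-move on top symbol `X`, and `δ X (some a)` is an
input move), an initial pushdown string `α ≠ []`.  Determinism: if an ε-move
is defined on `X`, then no input move is defined on `X`. -/
structure SDPDA (A : Type) where
  Γ : Type
  [instΓ : Fintype Γ]
  δ : Γ → Option A → Option (List Γ)
  det : ∀ X : Γ, δ X none ≠ none → ∀ a : A, δ X (some a) = none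
  α : List Γ
  α_ne : α ≠ []

attribute [instance] SDPDA.instΓ

/-- `M.Steps γ w γ'` : starting with pushdown content `γ` (top of the pushdown
is the head of the list), the automaton can read the input string `w` and end
with pushdown content `γ'`. -/
inductive SDPDA.Steps {A : Type} (M : SDPDA A) : List M.Γ → List A → List M.Γ → Prop
  | refl (γ : List M.Γ) : SDPDA.Steps M γ [] γ
  | input {X : M.Γ} {γ w : List M.Γ} {a : A} {ws : List A} {γ' : List M.Γ} :
      M.δ X (some a) = some w → SDPDA.Steps M (w ++ γ) ws γ' →
      SDPDA.Steps M (X :: γ) (a :: ws) γ'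
  | eps {X : M.Γ} {γ w : List M.Γ} {ws : List A} {γ' : List M.Γ} :
      M.δ X none = some w → SDPDA.Steps M (w ++ γ) ws γ' →
      SDPDA.Steps M (X :: γ) ws γ'

/-- Acceptance by empty pushdown. -/
def SDPDA.Accepts {A : Type} (M : SDPDA A) (w : List A) : Prop :=
  M.Steps M.α w []

/-- A stateless realtime (deterministic, no ε-moves) pushdown automaton over
input alphabet `A`: pushdown alphabet `Γ`, partial transition function `δ`,
and an initial pushdown string `α ≠ []`. -/
structure SRPDA (A : Type) where
  Γ : Type
  [instΓ : Fintype Γ]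
  δ : Γ → A → Option (List Γ)
  α : List Γ
  α_ne : α ≠ []

attribute [instance] SRPDA.instΓ

/-- `M.Steps γ w γ'` : starting with pushdown content `γ` (top of the pushdown
is the head of the list), the automaton reads the input string `w` and ends
with pushdown content `γ'`. -/
inductive SRPDA.Steps {A : Type} (M : SRPDA A) : List M.Γ → List A → List M.Γ → Prop
  | refl (γ : List M.Γ) : SRPDA.Steps M γ [] γ
  | step {X : M.Γ} {γ w : List M.Γ} {a : A} {ws : List A} {γ' : List M.Γ} :
      M.δ X a = some w → SRPDA.Steps M (w ++ γ) ws γ' →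
      SRPDA.Steps M (X :: γ) (a :: ws) γ'

/-- Acceptance by empty pushdown. -/
def SRPDA.Accepts {A : Type} (M : SRPDA A) (w : List A) : Prop :=
  M.Steps M.α w []

/-!
Call a pushdown symbol nullable if its ε-moves alone empty the pushdown. As ε-moves are
deterministic and pre-empt input moves, from a non-nullable symbol `X` they lead to a unique
configuration `Y :: τ` with no ε-move on `Y`. The realtime automaton keeps the pushdown alphabet,
never stores nullable symbols, and on `X` reading `a` performs in one step the ε-moves of `X`
followed by the `a`-move of `Y`, erasing the nullable symbols it pushes. Its initial pushdown is
`α` with the nullable symbols erased, which is empty only if `L = {ε}`.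
-/

namespace SDPDA

variable {A : Type} (M : SDPDA A)

def Stable (γ : List M.Γ) : Prop := ∀ X ∈ γ.head?, M.δ X none = none

def Nullable (X : M.Γ) : Prop := M.Steps [X] [] []

open Classical in
noncomputable def erase (γ : List M.Γ) : List M.Γ := γ.filter fun X => ¬ M.Nullable X

def EpsClosure (X Y : M.Γ) (τ : List M.Γ) : Prop :=
  M.Steps [X] [] (Y :: τ) ∧ M.δ Y none = none

variable {M}

@[simp] theorem stable_nil : M.Stable [] := by simp [Stable]

@[simp] theorem stable_cons {X : M.Γ} {γ : List M.Γ} : M.Stable (X :: γ) ↔ M.δ X none = none := by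
  simp [Stable]

theorem erase_append (σ ρ : List M.Γ) : M.erase (σ ++ ρ) = M.erase σ ++ M.erase ρ :=
  List.filter_append ..

theorem erase_cons_of_nullable {X : M.Γ} (hX : M.Nullable X) (γ : List M.Γ) :
    M.erase (X :: γ) = M.erase γ := by
  simp [erase, hX]

theorem erase_cons_of_not_nullable {X : M.Γ} (hX : ¬ M.Nullable X) (γ : List M.Γ) :
    M.erase (X :: γ) = X :: M.erase γ := by
  simp [erase, hX]

theorem erase_eq_nil_iff {γ : List M.Γ} : M.erase γ = [] ↔ ∀ X ∈ γ, M.Nullable X := by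
  simp [erase, List.filter_eq_nil_iff]

namespace Steps

theorem trans {γ γ' γ'' : List M.Γ} {w₁ w₂ : List A}
    (h₁ : M.Steps γ w₁ γ') (h₂ : M.Steps γ' w₂ γ'') : M.Steps γ (w₁ ++ w₂) γ'' := by
  induction h₁ with
  | refl => exact h₂
  | input hX _ ih => exact .input hX (ih h₂)
  | eps hX _ ih => exact .eps hX (ih h₂)

theorem append_right {σ σ' : List M.Γ} {w : List A} (h : M.Steps σ w σ') (ρ : List M.Γ) :
    M.Steps (σ ++ ρ) w (σ' ++ ρ) := by
  induction h with
  | refl => exact .refl _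
  | input hX _ ih => exact .input hX (by simpa using ih)
  | eps hX _ ih => exact .eps hX (by simpa using ih)

theorem append {σ ρ : List M.Γ} {w₁ w₂ : List A}
    (h₁ : M.Steps σ w₁ []) (h₂ : M.Steps ρ w₂ []) : M.Steps (σ ++ ρ) (w₁ ++ w₂) [] :=
  (h₁.append_right ρ).trans h₂

/-- The ε-moves are forced: any run to a stable configuration passes through every
configuration reachable by ε-moves. -/
theorem of_eps {γ σ ρ : List M.Γ} {w : List A} (h : M.Steps γ [] σ) (h' : M.Steps γ w ρ)
    (hρ : M.Stable ρ) : M.Steps σ w ρ := by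
  generalize hv : ([] : List A) = v at h
  induction h with
  | refl => exact h'
  | input => cases hv
  | @eps X _ _ _ _ hX _ ih =>
    cases h' with
    | refl => simp_all
    | input hXa => simp [M.det X (by simp [hX])] at hXa
    | eps hX' h' =>
      obtain rfl := Option.some.inj (hX.symm.trans hX')
      exact ih h' hv

theorem eq_of_stable {σ ρ : List M.Γ} (hσ : M.Stable σ) (h : M.Steps σ [] ρ) : σ = ρ := by
  cases h with
  | refl => rfl
  | eps hX => simp_all

end Steps

theorem steps_append_nil_iff {σ ρ : List M.Γ} {w : List A} :
    M.Steps (σ ++ ρ) w [] ↔ ∃ w₁ w₂, w = w₁ ++ w₂ ∧ M.Steps σ w₁ [] ∧ M.Steps ρ w₂ [] := by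
  refine ⟨fun h => ?_, fun ⟨w₁, w₂, hw, h₁, h₂⟩ => hw ▸ h₁.append h₂⟩
  generalize hγ : σ ++ ρ = γ, hn : ([] : List M.Γ) = τ at h
  induction h generalizing σ with
  | refl =>
    subst hn
    obtain ⟨rfl, rfl⟩ := List.append_eq_nil_iff.mp hγ
    exact ⟨[], [], rfl, .refl _, .refl _⟩
  | @input X _ u a _ _ hX h ih =>
    rcases σ with _ | ⟨Y, σ⟩
    · subst hγ hn
      exact ⟨[], _, rfl, .refl _, .input hX h⟩
    · obtain ⟨rfl, rfl⟩ := List.cons.inj hγ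
      obtain ⟨w₁, w₂, rfl, h₁, h₂⟩ := ih (σ := u ++ σ) (by simp) hn
      exact ⟨a :: w₁, w₂, rfl, .input hX h₁, h₂⟩
  | @eps X _ u _ _ hX h ih =>
    rcases σ with _ | ⟨Y, σ⟩
    · subst hγ hn
      exact ⟨[], _, rfl, .refl _, .eps hX h⟩
    · obtain ⟨rfl, rfl⟩ := List.cons.inj hγ
      obtain ⟨w₁, w₂, rfl, h₁, h₂⟩ := ih (σ := u ++ σ) (by simp) hn
      exact ⟨w₁, w₂, rfl, .eps hX h₁, h₂⟩

theorem steps_nil_nil_iff {γ : List M.Γ} : M.Steps γ [] [] ↔ ∀ X ∈ γ, M.Nullable X := by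
  induction γ with
  | nil => simpa using .refl []
  | cons X γ ih =>
    rw [List.forall_mem_cons, ← ih, ← List.singleton_append, steps_append_nil_iff]
    simp [Nullable]

theorem eq_nil_of_steps {γ : List M.Γ} {w : List A} (hε : M.Steps γ [] []) (h : M.Steps γ w []) :
    w = [] := by
  cases Steps.of_eps hε h stable_nil
  rfl

theorem Steps.of_erase {σ ρ : List M.Γ} {w : List A} (h : M.Steps (M.erase σ ++ ρ) w []) :
    M.Steps (σ ++ ρ) w [] := by
  induction σ generalizing w with
  | nil => simpa [erase] using h
  | cons X σ ih =>
    by_cases hX : M.Nullable X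
    · rw [erase_cons_of_nullable hX] at h
      simpa using (hX.append_right (σ ++ ρ)).trans (ih h)
    · rw [erase_cons_of_not_nullable hX, List.cons_append, ← List.singleton_append,
        steps_append_nil_iff] at h
      obtain ⟨w₁, w₂, rfl, h₁, h₂⟩ := h
      simpa using h₁.append (ih h₂)

theorem Steps.exists_eps_of_cons {γ ρ : List M.Γ} {a : A} {w : List A}
    (h : M.Steps γ (a :: w) ρ) :
    ∃ Y τ u, M.Steps γ [] (Y :: τ) ∧ M.δ Y none = none ∧ M.δ Y (some a) = some u ∧
      M.Steps (u ++ τ) w ρ := by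
  generalize hv : a :: w = v at h
  induction h with
  | refl => cases hv
  | @input X _ _ _ _ _ hX h =>
    obtain ⟨rfl, rfl⟩ := List.cons.inj hv
    have hXε : M.δ X none = none := by
      by_contra hε
      simp [M.det X hε] at hX
    exact ⟨X, _, _, .refl _, hXε, hX, h⟩
  | eps hX _ ih =>
    obtain ⟨Y, τ, u, hε, hY, hYa, h⟩ := ih hv
    exact ⟨Y, τ, u, .eps hX hε, hY, hYa, h⟩

theorem EpsClosure.unique {X Y Y' : M.Γ} {τ τ' : List M.Γ} (h : M.EpsClosure X Y τ)
    (h' : M.EpsClosure X Y' τ') : Y = Y' ∧ τ = τ' :=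
  List.cons_eq_cons.mp <|
    Steps.eq_of_stable (stable_cons.mpr h.2) (h.1.of_eps h'.1 (stable_cons.mpr h'.2))

variable (M) in
open Classical in
noncomputable def realtimeδ (X : M.Γ) (a : A) : Option (List M.Γ) :=
  if h : ∃ p : M.Γ × List M.Γ, M.EpsClosure X p.1 p.2 then
    (M.δ h.choose.1 (some a)).map fun u => M.erase (u ++ h.choose.2)
  else none

theorem realtimeδ_eq {X Y : M.Γ} {τ : List M.Γ} (hX : M.EpsClosure X Y τ) (a : A) :
    M.realtimeδ X a = (M.δ Y (some a)).map fun u => M.erase (u ++ τ) := by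
  have h : ∃ p : M.Γ × List M.Γ, M.EpsClosure X p.1 p.2 := ⟨(Y, τ), hX⟩
  obtain ⟨hY, hτ⟩ := h.choose_spec.unique hX
  rw [realtimeδ, dif_pos h, hY, hτ]

variable (M) in
@[reducible] noncomputable def toRealtime (α : List M.Γ) (hα : α ≠ []) : SRPDA A :=
  { Γ := M.Γ, δ := M.realtimeδ, α, α_ne := hα }

theorem steps_of_toRealtime_steps {α : List M.Γ} {hα : α ≠ []} :
    ∀ {γ : List M.Γ} {w : List A}, (M.toRealtime α hα).Steps γ w [] → M.Steps γ w []
  | _, _, .refl _ => .refl _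
  | _, _, .step (X := X) (γ := γ) (a := a) (ws := w) hXa h => by
    obtain ⟨⟨Y, τ⟩, hY⟩ : ∃ p : M.Γ × List M.Γ, M.EpsClosure X p.1 p.2 := by
      by_contra hX
      simp [realtimeδ, hX] at hXa
    obtain ⟨u, hYa, rfl⟩ := Option.map_eq_some_iff.mp ((realtimeδ_eq hY a).symm.trans hXa)
    have hu : M.Steps (u ++ (τ ++ γ)) w [] := by
      simpa [erase_append] using Steps.of_erase (σ := u ++ τ) (steps_of_toRealtime_steps h)
    simpa using (hY.1.append_right γ).trans (.input hYa hu)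

theorem exists_realtimeδ_of_steps {X : M.Γ} (hX : ¬ M.Nullable X) {w : List A}
    (h : M.Steps [X] w []) :
    ∃ a w' u, w = a :: w' ∧ M.realtimeδ X a = some (M.erase u) ∧ M.Steps u w' [] := by
  rcases w with _ | ⟨a, w'⟩
  · exact absurd h hX
  obtain ⟨Y, τ, u, hε, hY, hYa, hu⟩ := h.exists_eps_of_cons
  exact ⟨a, w', u ++ τ, rfl, by simp [realtimeδ_eq ⟨hε, hY⟩, hYa], hu⟩

theorem toRealtime_steps_erase {α : List M.Γ} {hα : α ≠ []} {γ : List M.Γ} {w : List A}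
    (h : M.Steps γ w []) : (M.toRealtime α hα).Steps (M.erase γ) w [] := by
  induction w generalizing γ with
  | nil =>
    rw [erase_eq_nil_iff.mpr (steps_nil_nil_iff.mp h)]
    exact .refl _
  | cons a w ih =>
    induction γ with
    | nil => cases h
    | cons X γ ihγ =>
      by_cases hX : M.Nullable X
      · rw [erase_cons_of_nullable hX]
        exact ihγ ((hX.append_right γ).of_eps h stable_nil)
      · rw [← List.singleton_append, steps_append_nil_iff] at h
        obtain ⟨w₁, w₂, hw, h₁, h₂⟩ := h
        obtain ⟨b, w₁, u, rfl, hXb, hu⟩ := exists_realtimeδ_of_steps hX h₁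
        obtain ⟨rfl, rfl⟩ := List.cons.inj hw
        rw [erase_cons_of_not_nullable hX]
        exact .step hXb (by simpa [erase_append] using ih (hu.append h₂))

end SDPDA

/-- For any stateless deterministic pushdown automaton with `n`
pushdown symbols accepting a language `L ≠ {ε}`, there is an equivalent
stateless realtime pushdown automaton with at most `n` pushdown symbols. -/
theorem sdpda_to_srpda {A : Type} (M : SDPDA A)
    (hL : {w : List A | M.Accepts w} ≠ {[]}) :
    ∃ M' : SRPDA A, Fintype.card M'.Γ ≤ Fintype.card M.Γ ∧
      ∀ w : List A, M'.Accepts w ↔ M.Accepts w := by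
  have hα : M.erase M.α ≠ [] := by
    intro h
    have hε : M.Accepts [] := SDPDA.steps_nil_nil_iff.mpr (SDPDA.erase_eq_nil_iff.mp h)
    exact hL (Set.eq_singleton_iff_unique_mem.mpr ⟨hε, fun w hw => SDPDA.eq_nil_of_steps hε hw⟩)
  refine ⟨M.toRealtime _ hα, le_rfl, fun w => ⟨fun hw => ?_, SDPDA.toRealtime_steps_erase⟩⟩
  have h : M.Steps (M.erase M.α ++ []) w [] := by simpa using SDPDA.steps_of_toRealtime_steps hw
  simpa [SDPDA.Accepts] using h.of_erase
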